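/- arXiv:1912.09881 — 4 statements merged into one kernel-verified Lean document; each statement's English description precedes it below -/
import Mathlib

section
/- Let T be a type of test cases, let (ι, k, d) be a family of datamorphisms on T, and let S : Set T. For every K : ℕ, the K-fold iterate F^[K](S) of the operator F on S equals the union ⋃_{i ≤ K} M i of the i'th order mutant sets of S for all i from 0 to K. (This is the equality underlying the Corollary of Theorem 1: repeating Algorithm 1 K times, each time feeding the output back as input, produces exactly the mutants of order at most K.) -/
/-- The set of first order mutants of `S` generated by the family of
datamorphisms `d` with arities `k`. -/
def FOM {T ι : Type*} (k : ι → ℕ) (d : ∀ i, (Fin (k i) → T) → T) (S : Set T) : Set T :=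
  {y : T | ∃ i : ι, ∃ x : Fin (k i) → T, (∀ j, x j ∈ S) ∧ y = d i x}

/-- The output of Algorithm 1: the seeds together with all first order mutants. -/
def F {T ι : Type*} (k : ι → ℕ) (d : ∀ i, (Fin (k i) → T) → T) (S : Set T) : Set T :=
  S ∪ FOM k d S

/-- The `n`'th order mutants of `S` by `d`: `M 0 = S` and a test case is an
`(n+1)`'th order mutant if it is obtained by applying a datamorphism to mutants
of order at most `n`, at least one of which has order exactly `n`. -/
def M {T ι : Type*} (k : ι → ℕ) (d : ∀ i, (Fin (k i) → T) → T) (S : Set T) : ℕ → Set T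
  | 0 => S
  | n + 1 =>
    {y : T | ∃ i : ι, ∃ x : Fin (k i) → T, y = d i x ∧
      (∀ j, x j ∈ ⋃ m ≤ n, M k d S m) ∧ (∃ j, x j ∈ M k d S n)}

/-- Iterating Algorithm 1 `K` times, each time feeding the output back as
input, produces exactly the mutants of order at most `K`. -/
theorem iterate_F_eq_union_M {T ι : Type*} (k : ι → ℕ) (hk : ∀ i, 1 ≤ k i)
    (d : ∀ i, (Fin (k i) → T) → T) (S : Set T) (K : ℕ) :
    (F k d)^[K] S = ⋃ i ≤ K, M k d S i := by
  induction K with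
  | zero => simp [M]
  | succ K ih =>
    rw [Function.iterate_succ_apply', ih]
    ext y
    constructor
    · rintro (hy | ⟨i, x, hx, rfl⟩)
      · simp only [Set.mem_iUnion] at hy ⊢
        obtain ⟨m, hm, hy⟩ := hy
        exact ⟨m, hm.trans (Nat.le_succ K), hy⟩
      · have hx' : ∀ j, ∃ m, m ≤ K ∧ x j ∈ M k d S m := by
          intro j; simpa [Set.mem_iUnion] using hx j
        choose f hf1 hf2 using hx'
        haveI : Nonempty (Fin (k i)) := Fin.pos_iff_nonempty.mp (hk i)
        obtain ⟨j0, hj0⟩ := Finite.exists_max f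
        refine Set.mem_iUnion.2 ⟨f j0 + 1, Set.mem_iUnion.2 ⟨Nat.succ_le_succ (hf1 j0), ?_⟩⟩
        simp only [M, Set.mem_setOf_eq]
        exact ⟨i, x, rfl, fun j => Set.mem_iUnion.2 ⟨f j, Set.mem_iUnion.2 ⟨hj0 j, hf2 j⟩⟩,
          ⟨j0, hf2 j0⟩⟩
    · intro hy
      simp only [Set.mem_iUnion] at hy
      obtain ⟨m, hm, hy⟩ := hy
      rcases Nat.lt_or_ge m (K + 1) with h | h
      · left; exact Set.mem_iUnion.2 ⟨m, Set.mem_iUnion.2 ⟨Nat.lt_succ_iff.mp h, hy⟩⟩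
      · have hmK : m = K + 1 := le_antisymm hm h
        subst hmK
        simp only [M, Set.mem_setOf_eq] at hy
        obtain ⟨i, x, rfl, hall, _⟩ := hy
        exact Or.inr ⟨i, x, fun j => hall j, rfl⟩
end

section
/- Let T be a type of test cases, let (ι, k, d) be a family of datamorphisms on T, and let S : Set T. For every K : ℕ, the K-fold iterate F^[K](S) is K'th order mutant complete with respect to S and d, and F^[K](S) ⊆ C for every set C that is K'th order mutant complete with respect to S and d; that is, F^[K](S) is the minimal K'th order mutant complete test set. (Corollary of Theorem 1.) -/
/-- `F^[K] S` is `K`'th order mutant complete with respect to `S` and `d`, and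
is contained in every `K`'th order mutant complete set; it is the minimal
`K`'th order mutant complete test set. -/
theorem iterate_F_minimal_complete {T ι : Type*} (k : ι → ℕ) (hk : ∀ i, 1 ≤ k i)
    (d : ∀ i, (Fin (k i) → T) → T) (S : Set T) (K : ℕ) :
    (⋃ i ≤ K, M k d S i) ⊆ (F k d)^[K] S ∧
      ∀ C : Set T, (⋃ i ≤ K, M k d S i) ⊆ C → (F k d)^[K] S ⊆ C := by
  have key : (F k d)^[K] S = ⋃ i ≤ K, M k d S i := by
    induction K with
    | zero => simp [M]
    | succ n ih =>
      rw [Function.iterate_succ_apply', ih]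
      apply Set.Subset.antisymm
      · rintro y (hy | ⟨i, x, hx, rfl⟩)
        · obtain ⟨m, hm, h⟩ := Set.mem_iUnion₂.1 hy
          exact Set.mem_iUnion₂.2 ⟨m, hm.trans (Nat.le_succ n), h⟩
        · -- all inputs are mutants of order ≤ n; take the max order
          choose f hfle hf using fun j => Set.mem_iUnion₂.1 (hx j)
          haveI : Nonempty (Fin (k i)) := ⟨⟨0, hk i⟩⟩
          obtain ⟨j0, hj0⟩ := Finite.exists_max f
          set N := f j0 with hN
          refine Set.mem_iUnion₂.2 ⟨N + 1, Nat.succ_le_succ (hfle j0), ?_⟩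
          simp only [M, Set.mem_setOf_eq]
          exact ⟨i, x, rfl, fun j => Set.mem_iUnion₂.2 ⟨f j, hj0 j, hf j⟩,
            ⟨j0, hf j0⟩⟩
      · intro y hy
        obtain ⟨m, hm, hym⟩ := Set.mem_iUnion₂.1 hy
        rcases Nat.lt_succ_iff_lt_or_eq.1 (Nat.lt_succ_of_le hm) with h | rfl
        · exact Or.inl (Set.mem_iUnion₂.2 ⟨m, Nat.lt_succ_iff.1 h, hym⟩)
        · simp only [M, Set.mem_setOf_eq] at hym
          obtain ⟨i, x, rfl, hx, -⟩ := hym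
          exact Or.inr ⟨i, x, hx, rfl⟩
  rw [key]
  exact ⟨le_refl _, fun C hC => hC⟩
end

section
/- Let T be a type of test cases, let (ι, k, d) be a family of datamorphisms on T, and let S : Set T. For every n : ℕ, applying the operator F to the union of the mutant sets of S of order at most n yields the union of the mutant sets of S of order at most n+1: F(⋃_{m ≤ n} M m) = ⋃_{m ≤ n+1} M m. (This is the induction step in the proof of the Corollary of Theorem 1.) -/
/-- Induction step in the proof of the Corollary of Theorem 1: applying `F` to
the union of the mutant sets of order at most `n` yields the union of the
mutant sets of order at most `n + 1`. -/
theorem F_union_M {T ι : Type*} (k : ι → ℕ) (hk : ∀ i, 1 ≤ k i)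
    (d : ∀ i, (Fin (k i) → T) → T) (S : Set T) (n : ℕ) :
    F k d (⋃ m ≤ n, M k d S m) = ⋃ m ≤ n + 1, M k d S m := by
  ext y
  simp only [F, FOM, Set.mem_union, Set.mem_setOf_eq, Set.mem_iUnion]
  constructor
  · rintro (⟨m, hm, hy⟩ | ⟨i, x, hx, rfl⟩)
    · exact ⟨m, hm.trans (Nat.le_succ n), hy⟩
    · -- pick an order for each coordinate, take the max
      have hi : Nonempty (Fin (k i)) := ⟨⟨0, hk i⟩⟩
      choose g hg1 hg2 using hx
      classical
      obtain ⟨j₀, -, hj₀⟩ := Finset.exists_mem_eq_sup Finset.univ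
        (Finset.univ_nonempty) g
      set N := Finset.univ.sup g with hN
      refine ⟨N + 1, Nat.succ_le_succ (hj₀ ▸ hg1 j₀), ?_⟩
      simp only [M, Set.mem_setOf_eq]
      refine ⟨i, x, rfl, ?_, ?_⟩
      · intro j
        exact Set.mem_iUnion₂.2 ⟨g j, Finset.le_sup (Finset.mem_univ j), hg2 j⟩
      · exact ⟨j₀, hj₀ ▸ hg2 j₀⟩
  · rintro ⟨m, hm, hy⟩
    rcases Nat.lt_or_ge m (n + 1) with h | h
    · exact Or.inl ⟨m, Nat.lt_succ_iff.1 h, hy⟩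
    · have : m = n + 1 := le_antisymm hm h
      subst this
      simp only [M, Set.mem_setOf_eq] at hy
      obtain ⟨i, x, rfl, hx, -⟩ := hy
      simp only [Set.mem_iUnion] at hx
      exact Or.inr ⟨i, x, hx, rfl⟩
end

section
/- Let T be a type of test cases, let (ι, k, d) be a family of datamorphisms on T, and let S : Set T. For every K : ℕ and every i ≤ K, every i'th order mutant of S by d belongs to the K-fold iterate F^[K](S); that is, M i ⊆ F^[K](S) for all i ≤ K. (Completeness half of the Corollary of Theorem 1.) -/
lemma subset_F {T ι : Type*} (k : ι → ℕ) (d : ∀ i, (Fin (k i) → T) → T) (S : Set T) :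
    S ⊆ F k d S := Set.subset_union_left

lemma F_mono {T ι : Type*} (k : ι → ℕ) (d : ∀ i, (Fin (k i) → T) → T) :
    Monotone (F k d) := by
  intro A B hAB y hy
  rcases hy with h | ⟨i, x, hx, rfl⟩
  · exact Or.inl (hAB h)
  · exact Or.inr ⟨i, x, fun j => hAB (hx j), rfl⟩

lemma iterate_F_mono_n {T ι : Type*} (k : ι → ℕ) (d : ∀ i, (Fin (k i) → T) → T)
    (S : Set T) : ∀ {m n : ℕ}, m ≤ n → (F k d)^[m] S ⊆ (F k d)^[n] S := by
  intro m n h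
  induction n with
  | zero => simpa [Nat.le_zero.mp h]
  | succ n ih =>
    rcases Nat.lt_or_ge m (n+1) with h' | h'
    · calc (F k d)^[m] S ⊆ (F k d)^[n] S := ih (Nat.lt_succ_iff.mp h')
        _ ⊆ F k d ((F k d)^[n] S) := subset_F k d _
        _ = (F k d)^[n+1] S := (Function.iterate_succ_apply' _ _ _).symm
    · have : m = n + 1 := le_antisymm h h'
      subst this; rfl

lemma M_subset_iterate {T ι : Type*} (k : ι → ℕ) (d : ∀ i, (Fin (k i) → T) → T)
    (S : Set T) : ∀ n, M k d S n ⊆ (F k d)^[n] S := by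
  intro n
  induction n using Nat.strong_induction_on with
  | _ n ih =>
    match n with
    | 0 => simp only [M, Function.iterate_zero, id]; exact fun _ h => h
    | n + 1 =>
      intro y hy
      simp only [M, Set.mem_setOf_eq] at hy
      obtain ⟨i, x, rfl, hx, -⟩ := hy
      rw [Function.iterate_succ_apply']
      refine Or.inr ⟨i, x, fun j => ?_, rfl⟩
      obtain ⟨s, ⟨m, rfl⟩, hs⟩ := hx j
      simp only [Set.mem_iUnion] at hs
      obtain ⟨hm, hs⟩ := hs
      exact iterate_F_mono_n k d S hm (ih m (Nat.lt_succ_of_le hm) hs)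

/-- Completeness half of the Corollary of Theorem 1: for every `i ≤ K`, every
`i`'th order mutant of `S` by `d` belongs to `F^[K] S`. -/
theorem M_subset_iterate_F {T ι : Type*} (k : ι → ℕ) (hk : ∀ i, 1 ≤ k i)
    (d : ∀ i, (Fin (k i) → T) → T) (S : Set T) (K : ℕ) :
    ∀ i ≤ K, M k d S i ⊆ (F k d)^[K] S := by
  intro i hi
  exact (M_subset_iterate k d S i).trans (iterate_F_mono_n k d S hi)
end
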